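/- Let n, s, m be positive integers with m < ns, and let C' be a real number greater than 1/2. If m/s ≥ (√(C' + 1/16) + 3/4)/(C' − 1/2), then for every m-dimensional F₂-linear subspace 𝒫 of M_{s,n}(F₂), the minimum Dick weight of 𝒫^⊥ satisfies δ_{𝒫^⊥} ≤ C'·m²/s. -/

import Mathlib

open scoped BigOperators

/-- The Dick weight of an `s × n` matrix over `𝔽₂`: `μ(X) = ∑_{i,j} j · x_{i,j}`
(with columns indexed `1, …, n`, i.e. column `j : Fin n` contributes `j+1`). -/
def dick {s n : ℕ} (X : Matrix (Fin s) (Fin n) (ZMod 2)) : ℕ :=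
  ∑ i : Fin s, ∑ j : Fin n, if X i j = 1 then (j : ℕ) + 1 else 0

/-- The orthogonal complement of a subspace of `M_{s,n}(𝔽₂)` with respect to the
inner product `A · B = ∑_{i,j} a_{i,j} b_{i,j}`. -/
def ortho {s n : ℕ} (P : Submodule (ZMod 2) (Matrix (Fin s) (Fin n) (ZMod 2))) :
    Submodule (ZMod 2) (Matrix (Fin s) (Fin n) (ZMod 2)) where
  carrier := {X | ∀ A ∈ P, ∑ i : Fin s, ∑ j : Fin n, A i j * X i j = 0}
  zero_mem' := by intro A _; simp
  add_mem' := by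
    intro X Y hX hY A hA
    have h1 := hX A hA
    have h2 := hY A hA
    calc (∑ i : Fin s, ∑ j : Fin n, A i j * (X + Y) i j)
        = (∑ i : Fin s, ∑ j : Fin n, A i j * X i j)
          + ∑ i : Fin s, ∑ j : Fin n, A i j * Y i j := by
          simp [Matrix.add_apply, mul_add, Finset.sum_add_distrib]
      _ = 0 := by rw [h1, h2, add_zero]
  smul_mem' := by
    intro c X hX A hA
    have h := hX A hA
    calc (∑ i : Fin s, ∑ j : Fin n, A i j * (c • X) i j)
        = c * ∑ i : Fin s, ∑ j : Fin n, A i j * X i j := by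
          simp [Matrix.smul_apply, smul_eq_mul, Finset.mul_sum, mul_left_comm]
      _ = 0 := by rw [h, mul_zero]

-- WAFOM of a subspace `P` of `M_{s,n}(𝔽₂)`: `∑_{X ∈ P^⊥ \ {O}} 2^{-μ(X)}`.
open Classical in
noncomputable def wafom {s n : ℕ}
    (P : Submodule (ZMod 2) (Matrix (Fin s) (Fin n) (ZMod 2))) : ℝ :=
  ∑ X : Matrix (Fin s) (Fin n) (ZMod 2),
    if X ∈ ortho P ∧ X ≠ 0 then (2 : ℝ) ^ (-(dick X : ℤ)) else 0

/-- The minimum Dick weight of `P^⊥`: `δ = min_{X ∈ P^⊥ \ {O}} μ(X)`. -/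
noncomputable def minWeight {s n : ℕ}
    (P : Submodule (ZMod 2) (Matrix (Fin s) (Fin n) (ZMod 2))) : ℕ :=
  sInf {k | ∃ X ∈ ortho P, X ≠ 0 ∧ dick X = k}

/-! The matrices supported on the first `t = ⌊m/s⌋ + 1` columns form a space of dimension
`st > m`, while membership in `P^⊥` imposes only `m` linear conditions, so some nonzero such
matrix lies in `P^⊥`. Its Dick weight is at most `s(1 + ⋯ + t) = st(t+1)/2`, and
`t ≤ m/s + 1` together with the hypothesis on `m/s` bounds this by `C'm²/s`. -/

open Module

section Pairing

variable {R : Type*} [CommSemiring R] {ι κ : Type*} [Fintype ι] [Fintype κ]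

def Matrix.pairingDual (P : Submodule R (Matrix ι κ R)) : Matrix ι κ R →ₗ[R] Dual R P :=
  LinearMap.mk₂ R (fun X A => ∑ i, ∑ j, (A : Matrix ι κ R) i j * X i j)
    (by intros; simp only [Matrix.add_apply, mul_add, Finset.sum_add_distrib])
    (by intros; simp only [Matrix.smul_apply, smul_eq_mul, Finset.mul_sum, mul_left_comm])
    (by intros; simp only [Submodule.coe_add, Matrix.add_apply, add_mul, Finset.sum_add_distrib])
    (by intros; simp only [Submodule.coe_smul, Matrix.smul_apply, smul_eq_mul, Finset.mul_sum,
      mul_assoc])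

end Pairing

theorem ker_pairingDual_eq_ortho {s n : ℕ}
    (P : Submodule (ZMod 2) (Matrix (Fin s) (Fin n) (ZMod 2))) :
    LinearMap.ker (Matrix.pairingDual P) = ortho P := by
  ext X
  simp [ortho, Matrix.pairingDual, LinearMap.ext_iff]

section PadCols

variable {R : Type*} [Semiring R] {ι : Type*} {t : ℕ}

def Matrix.padCols (n : ℕ) : Matrix ι (Fin t) R →ₗ[R] Matrix ι (Fin n) R where
  toFun Y := Matrix.of fun i j => if h : (j : ℕ) < t then Y i ⟨j, h⟩ else 0
  map_add' Y Z := by ext i j; by_cases h : (j : ℕ) < t <;> simp [h]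
  map_smul' c Y := by ext i j; by_cases h : (j : ℕ) < t <;> simp [h]

theorem Matrix.padCols_apply_of_le {n : ℕ} (Y : Matrix ι (Fin t) R) (i : ι) {j : Fin n}
    (hj : t ≤ j) :
    Matrix.padCols n Y i j = 0 := by
  simp [Matrix.padCols, hj.not_gt]

theorem Matrix.padCols_injective {n : ℕ} (h : t ≤ n) :
    Function.Injective (Matrix.padCols n : Matrix ι (Fin t) R →ₗ[R] Matrix ι (Fin n) R) := by
  intro X Y hXY
  ext i k
  simpa [Matrix.padCols] using congr_fun₂ hXY i (Fin.castLE h k)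

end PadCols

theorem exists_mem_ortho_ne_zero_of_finrank_lt {s n t : ℕ} (htn : t ≤ n)
    {P : Submodule (ZMod 2) (Matrix (Fin s) (Fin n) (ZMod 2))} (hP : finrank (ZMod 2) P < s * t) :
    ∃ X ∈ ortho P, X ≠ 0 ∧ ∀ i (j : Fin n), t ≤ (j : ℕ) → X i j = 0 := by
  have hker : LinearMap.ker (Matrix.pairingDual P ∘ₗ Matrix.padCols n) ≠ ⊥ :=
    LinearMap.ker_ne_bot_of_finrank_lt <| by
      simpa [Subspace.dual_finrank_eq, Module.finrank_matrix] using hP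
  obtain ⟨Y, hY, hY0⟩ := Submodule.exists_mem_ne_zero_of_ne_bot hker
  refine ⟨Matrix.padCols n Y, ?_, ?_, fun i j hj => Matrix.padCols_apply_of_le Y i hj⟩
  · rwa [← ker_pairingDual_eq_ortho, LinearMap.mem_ker, ← LinearMap.comp_apply,
      ← LinearMap.mem_ker]
  · exact (map_ne_zero_iff _ (Matrix.padCols_injective htn)).mpr hY0

theorem Fin.sum_ite_lt_le_sum_range (n t : ℕ) :
    ∑ j : Fin n, (if (j : ℕ) < t then (j : ℕ) + 1 else 0) ≤
      ∑ k ∈ Finset.range t, (k + 1) := by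
  rw [Fin.sum_univ_eq_sum_range (fun k => if k < t then k + 1 else 0), ← Finset.sum_filter]
  exact Finset.sum_le_sum_of_subset fun k hk => by simp_all

theorem two_mul_dick_le {s n t : ℕ} {X : Matrix (Fin s) (Fin n) (ZMod 2)}
    (hX : ∀ i (j : Fin n), t ≤ (j : ℕ) → X i j = 0) : 2 * dick X ≤ s * (t * (t + 1)) := by
  have hrow : ∀ i, ∑ j : Fin n, (if X i j = 1 then (j : ℕ) + 1 else 0)
      ≤ ∑ k ∈ Finset.range t, (k + 1) := fun i =>
    (Finset.sum_le_sum fun j _ => by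
      by_cases hj : (j : ℕ) < t
      · simp only [hj, if_true]; split_ifs <;> omega
      · simp [hX i j (not_lt.mp hj)]).trans (Fin.sum_ite_lt_le_sum_range n t)
  have hgauss : 2 * ∑ k ∈ Finset.range t, (k + 1) = t * (t + 1) := by
    have := Finset.sum_range_id_mul_two (t + 1)
    rw [Finset.sum_range_succ'] at this
    simp only [add_zero, add_tsub_cancel_right] at this
    linarith
  calc 2 * dick X ≤ 2 * ∑ _i : Fin s, ∑ k ∈ Finset.range t, (k + 1) :=
        Nat.mul_le_mul_left 2 (Finset.sum_le_sum fun i _ => hrow i)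
    _ = s * (t * (t + 1)) := by
        rw [Finset.sum_const, Finset.card_univ, Fintype.card_fin, smul_eq_mul, ← hgauss]; ring

theorem minWeight_le_dick {s n : ℕ} {P : Submodule (ZMod 2) (Matrix (Fin s) (Fin n) (ZMod 2))}
    {X : Matrix (Fin s) (Fin n) (ZMod 2)} (hX : X ∈ ortho P) (hX0 : X ≠ 0) :
    minWeight P ≤ dick X :=
  Nat.sInf_le ⟨X, hX, hX0, rfl⟩

-- The threshold is the positive root of `(2C' - 1) r² - 3r - 2`.
theorem add_one_mul_add_two_le {C' r : ℝ} (hC' : 1 / 2 < C')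
    (hr : (Real.sqrt (C' + 1 / 16) + 3 / 4) / (C' - 1 / 2) ≤ r) :
    (r + 1) * (r + 2) ≤ 2 * C' * r ^ 2 := by
  set q := Real.sqrt (C' + 1 / 16)
  have hc : 0 < C' - 1 / 2 := by linarith
  have hq : 0 ≤ q := Real.sqrt_nonneg _
  have hq2 : q ^ 2 = C' + 1 / 16 := Real.sq_sqrt (by linarith)
  have hu : q + 3 / 4 ≤ (C' - 1 / 2) * r := by rwa [div_le_iff₀' hc] at hr
  -- with `u = (C' - 1/2) r`, the claim times `C' - 1/2` is `(u - 3/4)² ≥ q²`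
  have hsq : q ^ 2 ≤ ((C' - 1 / 2) * r - 3 / 4) ^ 2 := pow_le_pow_left₀ hq (by linarith) 2
  nlinarith

theorem minWeight_upper_bound'_general (n s m : ℕ)
    (hmns : m < n * s) (C' : ℝ) (hC' : 1 / 2 < C')
    (hratio : (m : ℝ) / s ≥ (Real.sqrt (C' + 1 / 16) + 3 / 4) / (C' - 1 / 2))
    (P : Submodule (ZMod 2) (Matrix (Fin s) (Fin n) (ZMod 2)))
    (hdim : Module.finrank (ZMod 2) P = m) :
    (minWeight P : ℝ) ≤ C' * (m : ℝ) ^ 2 / (s : ℝ) := by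
  have hs : 0 < s := Nat.pos_of_mul_pos_left (Nat.zero_lt_of_lt hmns)
  set t := m / s + 1
  have htn : t ≤ n := (Nat.div_lt_iff_lt_mul hs).mpr hmns
  have hmt : Module.finrank (ZMod 2) P < s * t := hdim ▸ Nat.lt_mul_div_succ m hs
  obtain ⟨X, hXP, hX0, hXt⟩ := exists_mem_ortho_ne_zero_of_finrank_lt htn hmt
  have htr : (t : ℝ) ≤ m / s + 1 := by
    simp only [t, Nat.cast_add, Nat.cast_one, add_le_add_iff_right, Nat.cast_div_le]
  have hdick : 2 * (dick X : ℝ) ≤ s * (t * (t + 1)) := by exact_mod_cast two_mul_dick_le hXt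
  calc (minWeight P : ℝ) ≤ dick X := by exact_mod_cast minWeight_le_dick hXP hX0
    _ ≤ s * (t * (t + 1)) / 2 := by rw [le_div_iff₀ two_pos]; linarith
    _ ≤ s * ((m / s + 1) * (m / s + 1 + 1)) / 2 := by gcongr
    _ ≤ s * (2 * C' * (m / s) ^ 2) / 2 := by
        gcongr s * ?_ / 2
        linarith [add_one_mul_add_two_le hC' hratio]
    _ = C' * m ^ 2 / s := by field_simp

/-- Lemma 3.2 (b): for `C' > 1/2` and `m/s ≥ (√(C'+1/16)+3/4)/(C'-1/2)`,
every `m`-dimensional subspace `P` of `M_{s,n}(𝔽₂)` satisfies `δ_{P^⊥} ≤ C'm²/s`. -/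
theorem minWeight_upper_bound' (n s m : ℕ) (hn : 0 < n) (hs : 0 < s) (hm : 0 < m)
    (hmns : m < n * s) (C' : ℝ) (hC' : 1 / 2 < C')
    (hratio : (m : ℝ) / s ≥ (Real.sqrt (C' + 1 / 16) + 3 / 4) / (C' - 1 / 2))
    (P : Submodule (ZMod 2) (Matrix (Fin s) (Fin n) (ZMod 2)))
    (hdim : Module.finrank (ZMod 2) P = m) :
    (minWeight P : ℝ) ≤ C' * (m : ℝ) ^ 2 / (s : ℝ) :=
  minWeight_upper_bound'_general n s m hmns C' hC' hratio P hdim
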